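/- arXiv:math/0306161 — 4 statements merged into one kernel-verified Lean document; each statement's English description precedes it below -/
import Mathlib

section
/- For the equidistant nodes t_j = -π + 2πj/N, the quantity τ_j = d/dt[∏_{l=1}^N sin((t - t_l)/2)] evaluated at t_j satisfies τ_j / τ_k = (-1)^{j-k} for all j, k, i.e., all τ_j have equal absolute value with alternating signs. -/
open Real Finset

/-!
The product `F t = ∏ l, sin ((t - t_l) / 2)` is antiperiodic with antiperiod `2π/N`: shifting `t`
by `2π/N` permutes the nodes cyclically, except that one node wraps around by `2π`, which flips the
sign of its factor. Hence `F'` is antiperiodic too, and `τ_j = (-1)^j τ_0`. Finally `τ_k ≠ 0`: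
at a node only one factor vanishes, so `τ_k = ½ ∏_{l ≠ k} sin (π (k - l) / N)` with `0 < |k - l| < N`.
-/

/-- Equidistant nodes `t_j = -π + 2πj/N`. -/
noncomputable def node (N : ℕ) (j : Fin N) : ℝ := -π + 2 * π * (j.1 + 1) / N

/-- `τ_j = d/dt [∏_{l=1}^N sin((t - t_l)/2)]` evaluated at `t = t_j`. -/
noncomputable def tau (N : ℕ) (j : Fin N) : ℝ :=
  deriv (fun t => ∏ l : Fin N, Real.sin ((t - node N l) / 2)) (node N j)

theorem Function.Antiperiodic.deriv {𝕜 F : Type*} [NontriviallyNormedField 𝕜]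
    [NormedAddCommGroup F] [NormedSpace 𝕜 F] {f : 𝕜 → F} {c : 𝕜}
    (hf : Function.Antiperiodic f c) : Function.Antiperiodic (deriv f) c := fun x => by
  rw [← deriv_comp_add_const, funext hf, deriv.fun_neg]

theorem Finset.prod_range_eq_neg_prod_range_add_one {R : Type*} [CommRing R] {f : ℕ → R} {n : ℕ}
    (hn : 0 < n) (hf : f n = -f 0) : ∏ i ∈ range n, f i = -∏ i ∈ range n, f (i + 1) := by
  obtain ⟨m, rfl⟩ := Nat.exists_eq_add_one_of_ne_zero hn.ne'
  rw [prod_range_succ', prod_range_succ (fun i => f (i + 1)), hf, mul_neg, neg_neg]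

theorem deriv_prod_of_apply_eq_zero {ι 𝕜 : Type*} [NontriviallyNormedField 𝕜] [DecidableEq ι]
    {s : Finset ι} {f : ι → 𝕜 → 𝕜} {x : 𝕜} {j : ι} (hj : j ∈ s)
    (hf : ∀ i ∈ s, DifferentiableAt 𝕜 (f i) x) (hfj : f j x = 0) :
    deriv (fun t => ∏ i ∈ s, f i t) x = deriv (f j) x * ∏ i ∈ s.erase j, f i x := by
  have hsplit : (fun t => ∏ i ∈ s, f i t) = fun t => f j t * ∏ i ∈ s.erase j, f i t :=
    funext fun t => (mul_prod_erase s (f · t) hj).symm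
  have hrest : DifferentiableAt 𝕜 (fun t => ∏ i ∈ s.erase j, f i t) x :=
    DifferentiableAt.fun_finsetProd fun i hi => hf i (mem_of_mem_erase hi)
  rw [hsplit, deriv_fun_mul (hf j hj) hrest, hfj, zero_mul, add_zero]

noncomputable def nodalProd (N : ℕ) (t : ℝ) : ℝ := ∏ l : Fin N, Real.sin ((t - node N l) / 2)

theorem nodalProd_antiperiodic {N : ℕ} (hN : 0 < N) :
    Function.Antiperiodic (nodalProd N) (2 * π / N) := fun t => by
  have hN' : (N : ℝ) ≠ 0 := by positivity
  let a : ℝ → ℕ → ℝ := fun s l => Real.sin ((s + π - 2 * π * l / N) / 2)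
  have hprod : ∀ s, nodalProd N s = ∏ l ∈ range N, a s (l + 1) := fun s => by
    rw [nodalProd, ← Fin.prod_univ_eq_prod_range]
    refine prod_congr rfl fun l _ => ?_
    simp only [a, node]
    push_cast
    ring_nf
  have hshift : ∀ l : ℕ, a (t + 2 * π / N) (l + 1) = a t l := fun l => by
    simp only [a]
    push_cast
    congr 1
    field_simp
    ring
  have hwrap : a t N = -a t 0 := by
    simp only [a, Nat.cast_zero, mul_zero, zero_div, sub_zero]
    rw [← Real.sin_sub_pi]
    congr 1
    field_simp
  simp only [hprod, hshift]
  exact prod_range_eq_neg_prod_range_add_one hN hwrap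

theorem node_eq_add_nat_mul {N : ℕ} (hN : 0 < N) (j : Fin N) :
    node N j = node N ⟨0, hN⟩ + j * (2 * π / N) := by
  simp only [node]
  ring

theorem tau_eq_neg_one_pow_mul {N : ℕ} (hN : 0 < N) (j : Fin N) :
    tau N j = (-1) ^ (j : ℕ) * tau N ⟨0, hN⟩ := by
  rw [tau, node_eq_add_nat_mul hN j]
  exact (nodalProd_antiperiodic hN).deriv.add_nat_mul_eq j

theorem sub_node_div_two {N : ℕ} (j l : Fin N) :
    (node N j - node N l) / 2 = π * ((j : ℝ) - l) / N := by
  simp only [node]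
  ring

theorem sin_sub_node_div_two_ne_zero {N : ℕ} {j l : Fin N} (hjl : j ≠ l) :
    Real.sin ((node N j - node N l) / 2) ≠ 0 := by
  have hN : (0 : ℝ) < N := by exact_mod_cast j.pos
  have hjN : (j : ℝ) < N := by exact_mod_cast j.isLt
  have hlN : (l : ℝ) < N := by exact_mod_cast l.isLt
  have hjl' : (j : ℝ) - l ≠ 0 := sub_ne_zero.mpr (by exact_mod_cast Fin.val_ne_of_ne hjl)
  rw [sub_node_div_two, Ne, sin_eq_zero_iff_of_lt_of_lt]
  · exact div_ne_zero (mul_ne_zero pi_ne_zero hjl') hN.ne'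
  · rw [lt_div_iff₀ hN]
    nlinarith [pi_pos, (l.val).cast_nonneg (α := ℝ)]
  · rw [div_lt_iff₀ hN]
    nlinarith [pi_pos, (j.val).cast_nonneg (α := ℝ)]

theorem tau_eq_half_mul_prod {N : ℕ} (j : Fin N) :
    tau N j = 1 / 2 * ∏ l ∈ univ.erase j, Real.sin ((node N j - node N l) / 2) := by
  have hderiv : ∀ c : ℝ, HasDerivAt (fun t => Real.sin ((t - c) / 2)) (1 / 2) c := fun c => by
    simpa using (((hasDerivAt_id c).sub_const c).div_const 2).sin
  rw [tau, deriv_prod_of_apply_eq_zero (f := fun l t => Real.sin ((t - node N l) / 2))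
    (mem_univ j) (fun l _ => by fun_prop) (by simp), (hderiv _).deriv]

theorem tau_ne_zero {N : ℕ} (j : Fin N) : tau N j ≠ 0 := by
  rw [tau_eq_half_mul_prod]
  exact mul_ne_zero (by norm_num) (prod_ne_zero_iff.mpr fun l hl =>
    sin_sub_node_div_two_ne_zero (ne_of_mem_erase hl).symm)

theorem tau_ratio_general (N : ℕ) (j k : Fin N) :
    tau N j / tau N k = (-1 : ℝ) ^ ((j.1 : ℤ) - (k.1 : ℤ)) := by
  rw [tau_eq_neg_one_pow_mul j.pos j, tau_eq_neg_one_pow_mul j.pos k,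
    mul_div_mul_right _ _ (tau_ne_zero _), zpow_sub₀ (by norm_num), zpow_natCast, zpow_natCast]

theorem tau_ratio (N : ℕ) (hN : 0 < N) (j k : Fin N) :
    tau N j / tau N k = (-1 : ℝ) ^ ((j.1 : ℤ) - (k.1 : ℤ)) :=
  tau_ratio_general N j k
end

section
/- Let N = 2n+1 be odd, and let D be the N×N equispaced trigonometric differentiation matrix with nodes t_j = -π + 2πj/N. For every integer m with |m| ≤ n, the vector v with components v_j = exp(i m t_j) satisfies D v = (i m) v; that is, each such exponential sampled at the nodes is an eigenvector of D with eigenvalue i m. -/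
/-!
Because `t_k - t_j = 2π(k - j)/N` and `(-1)^(j+k) = exp(iπ(k - j))`, the `(j, k)` term of `D v`
is `v_j K_m(k - j)` with `K_m(x) = -exp(iπ(N + 2m)x/N) / (2 sin(πx/N))`. For odd `N` the kernel
`K_m` is `N`-periodic on the integers, so every row sum equals `S(m) = ∑_{d<N} K_m(d)`.
`S(0) = 0` since `K_0` is odd on the integers, and `K_{m+1}(x) - K_m(x) = -i exp(iπ(N + 2m + 1)x/N)`
gives `S(m+1) - S(m) = -i ∑_{0<d<N} ω^d = i` for `-n ≤ m < n`, where `ω = exp(2πi(n + m + 1)/N)`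
is an `N`-th root of unity other than `1`.
-/

open Real

/-- The equispaced trigonometric differentiation matrix, as a complex matrix. -/
noncomputable def Dmat (N : ℕ) : Matrix (Fin N) (Fin N) ℂ := fun j k =>
  if j = k then 0
  else (-1 : ℂ) ^ (j.1 + k.1) / (2 * (Real.sin (π * ((j.1 : ℝ) - (k.1 : ℝ)) / N) : ℂ))

open Finset

namespace Function.Periodic

variable {M : Type*} [AddCommMonoid M] {f : ℤ → M} {N : ℕ}

theorem sum_range_add_one (hf : Periodic f N) :
    ∑ k ∈ range N, f (k + 1) = ∑ k ∈ range N, f k := by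
  cases N with
  | zero => simp
  | succ N =>
    rw [sum_range_succ, sum_range_succ' (fun k : ℕ => f k)]
    push_cast at hf ⊢
    rw [hf.eq]

theorem sum_range_add (hf : Periodic f N) (a : ℤ) :
    ∑ k ∈ range N, f (k + a) = ∑ k ∈ range N, f k := by
  induction a using Int.inductionOn' (b := 0) with
  | zero => simp
  | succ a _ ih =>
    rw [← ih, ← (hf.add_const a).sum_range_add_one]
    simp only [add_right_comm, add_assoc]
  | pred a _ ih =>
    rw [← ih, ← (hf.add_const (a - 1)).sum_range_add_one]
    simp only [add_assoc, add_sub_cancel]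

theorem sum_range_neg (hf : Periodic f N) :
    ∑ k ∈ range N, f (-k) = ∑ k ∈ range N, f k := by
  rw [← sum_range_reflect, ← hf.sum_range_add_one]
  refine sum_congr rfl fun k hk => ?_
  rw [mem_range] at hk
  rw [Nat.cast_sub (by omega), Nat.cast_sub (by omega), ← hf.sub_eq (k + 1 : ℤ)]
  congr 1
  push_cast
  ring

end Function.Periodic

open Complex (I)

-- `diffKernel N m 0 = 0` because `sin 0 = 0` and `x / 0 = 0`, matching the zero diagonal of `Dmat`.
noncomputable def diffKernel (N : ℕ) (m : ℤ) (x : ℝ) : ℂ :=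
  -Complex.exp (π * (N + 2 * m) * x / N * I) / (2 * Real.sin (π * x / N))

theorem Dmat_mul_exp_node (N : ℕ) (m : ℤ) (j k : Fin N) :
    Dmat N j k * Complex.exp (I * m * (node N k : ℝ)) =
      Complex.exp (I * m * (node N j : ℝ)) * diffKernel N m ((k : ℝ) - j) := by
  by_cases hjk : j = k
  · subst hjk
    simp [Dmat, diffKernel]
  have hN : (N : ℂ) ≠ 0 := by exact_mod_cast j.pos.ne'
  have hsin : Real.sin (π * ((j : ℝ) - k) / N) = -Real.sin (π * ((k : ℝ) - j) / N) := by
    rw [← Real.sin_neg]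
    ring_nf
  have hexp : (-1 : ℂ) ^ (j.1 + k.1) * Complex.exp (I * m * (node N k : ℝ)) =
      Complex.exp (I * m * (node N j : ℝ)) *
        Complex.exp (π * (N + 2 * m) * ((k : ℝ) - j : ℝ) / N * I) := by
    rw [← Complex.exp_pi_mul_I, ← Complex.exp_nat_mul, ← Complex.exp_add, ← Complex.exp_add,
      ← mul_one (Complex.exp (_ + _)), ← Complex.exp_int_mul_two_pi_mul_I (-j), ← Complex.exp_add]
    congr 1
    simp only [node]
    push_cast
    field_simp
    ring
  simp only [Dmat, if_neg hjk, diffKernel, hsin]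
  rw [div_mul_eq_mul_div, hexp]
  push_cast
  ring

theorem diffKernel_intCast_periodic {N : ℕ} (hN : Odd N) (m : ℤ) :
    Function.Periodic (fun d : ℤ => diffKernel N m d) N := by
  intro d
  have hNℝ : (N : ℝ) ≠ 0 := by exact_mod_cast hN.pos.ne'
  have hNℂ : (N : ℂ) ≠ 0 := by exact_mod_cast hNℝ
  have hexp : Complex.exp (π * (N + 2 * m) * ((d + N : ℝ) : ℂ) / N * I) =
      -Complex.exp (π * (N + 2 * m) * (d : ℝ) / N * I) := by
    have hodd : Odd ((N : ℤ) + 2 * m) := by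
      rcases hN with ⟨k, rfl⟩
      exact ⟨k + m, by push_cast; ring⟩
    rw [show (π * (N + 2 * m) * ((d + N : ℝ) : ℂ) / N * I : ℂ) =
        π * (N + 2 * m) * (d : ℝ) / N * I + (((N : ℤ) + 2 * m : ℤ) : ℂ) * (π * I) by
          push_cast; field_simp,
      Complex.exp_add, Complex.exp_int_mul, Complex.exp_pi_mul_I, hodd.neg_one_zpow]
    ring
  have hsin : Real.sin (π * (d + N) / N) = -Real.sin (π * d / N) := by
    rw [show π * (d + N) / N = π * d / N + π by field_simp, Real.sin_add_pi]
  simp only [diffKernel, Int.cast_add, Int.cast_natCast, hexp, hsin, Complex.ofReal_neg]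
  ring

theorem diffKernel_zero_neg (N : ℕ) (d : ℤ) : diffKernel N 0 (-d) = -diffKernel N 0 d := by
  rcases eq_or_ne N 0 with rfl | hN
  · simp [diffKernel]
  have hNℂ : (N : ℂ) ≠ 0 := by exact_mod_cast hN
  have hexp : Complex.exp (π * N * (-d : ℝ) / N * I) = Complex.exp (π * N * (d : ℝ) / N * I) := by
    rw [← mul_one (Complex.exp (π * N * (-d : ℝ) / N * I)), ← Complex.exp_int_mul_two_pi_mul_I d,
      ← Complex.exp_add]
    congr 1
    push_cast
    field_simp
    ring
  simp only [diffKernel, Int.cast_zero, mul_zero, add_zero]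
  rw [hexp, mul_neg, neg_div (N : ℝ), Real.sin_neg, Complex.ofReal_neg]
  ring

theorem Complex.exp_add_mul_I_sub_exp_sub_mul_I (a θ : ℂ) :
    Complex.exp ((a + θ) * I) - Complex.exp ((a - θ) * I) =
      2 * Complex.sin θ * I * Complex.exp (a * I) := by
  rw [Complex.two_sin, add_mul, sub_mul, sub_eq_add_neg (a * I), ← neg_mul, Complex.exp_add,
    Complex.exp_add]
  linear_combination
    -(Complex.exp (a * I) * (Complex.exp (-θ * I) - Complex.exp (θ * I))) * Complex.I_sq

theorem diffKernel_succ_sub (N : ℕ) (m : ℤ) {x : ℝ} (hx : Real.sin (π * x / N) ≠ 0) :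
    diffKernel N (m + 1) x - diffKernel N m x =
      -I * Complex.exp (π * (N + 2 * m + 1) * x / N * I) := by
  have hsin : Complex.sin (π * x / N : ℝ) ≠ 0 := by
    rw [← Complex.ofReal_sin]
    exact_mod_cast hx
  have hplus : (π * (N + 2 * ((m + 1 : ℤ) : ℂ)) * x / N : ℂ) =
      π * (N + 2 * m + 1) * x / N + (π * x / N : ℝ) := by
    push_cast
    ring
  have hminus : (π * (N + 2 * (m : ℂ)) * x / N : ℂ) =
      π * (N + 2 * m + 1) * x / N - (π * x / N : ℝ) := by
    push_cast
    ring
  rw [diffKernel, diffKernel, hplus, hminus, Complex.ofReal_sin, div_sub_div_same, neg_sub_neg,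
    ← neg_sub, Complex.exp_add_mul_I_sub_exp_sub_mul_I]
  field_simp

theorem sum_range_exp_pow_eq_zero {N : ℕ} {k : ℤ} (hk : ¬ (N : ℤ) ∣ k) :
    ∑ d ∈ range N, Complex.exp (2 * π * k / N * I) ^ d = 0 := by
  rcases eq_or_ne N 0 with rfl | hN
  · simp
  have hζ := Complex.isPrimitiveRoot_exp N hN
  have hz : Complex.exp (2 * π * k / N * I) = Complex.exp (2 * π * I / N) ^ k := by
    rw [← Complex.exp_int_mul]
    ring_nf
  have hzN : Complex.exp (2 * π * k / N * I) ^ N = 1 := by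
    rw [hz, ← zpow_natCast, ← zpow_mul, mul_comm k, zpow_mul, zpow_natCast, hζ.pow_eq_one, one_zpow]
  have hz1 : Complex.exp (2 * π * k / N * I) ≠ 1 := by
    rwa [hz, Ne, hζ.zpow_eq_one_iff_dvd]
  rw [geom_sum_eq hz1, hzN, sub_self, zero_div]

theorem sum_diffKernel_succ {n : ℕ} {m : ℤ} (h₁ : -n ≤ m) (h₂ : m < n) :
    ∑ d ∈ range (2 * n + 1), diffKernel (2 * n + 1) (m + 1) d =
      ∑ d ∈ range (2 * n + 1), diffKernel (2 * n + 1) m d + I := by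
  set z := Complex.exp (2 * π * (n + m + 1 : ℤ) / (2 * n + 1 : ℕ) * I)
  have hdiff : ∀ d ∈ range (2 * n), diffKernel (2 * n + 1) (m + 1) (d + 1 : ℕ) -
      diffKernel (2 * n + 1) m (d + 1 : ℕ) = -I * z ^ (d + 1) := by
    intro d hd
    rw [mem_range] at hd
    have hsin : Real.sin (π * (d + 1 : ℕ) / (2 * n + 1 : ℕ)) ≠ 0 := by
      refine (Real.sin_pos_of_pos_of_lt_pi (by positivity) ?_).ne'
      rw [div_lt_iff₀ (by positivity)]
      gcongr
    rw [diffKernel_succ_sub _ _ hsin, ← Complex.exp_nat_mul]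
    congr 2
    push_cast
    ring
  have hgeom : ∑ d ∈ range (2 * n + 1), z ^ d = 0 :=
    sum_range_exp_pow_eq_zero (by rw [Int.dvd_iff_emod_eq_zero, Int.emod_eq_of_lt] <;> omega)
  rw [sum_range_succ'] at hgeom
  rw [← sub_eq_iff_eq_add', ← sum_sub_distrib, sum_range_succ', sum_congr rfl hdiff, ← mul_sum]
  simp only [diffKernel, Nat.cast_zero, mul_zero, zero_div, Real.sin_zero, Complex.ofReal_zero,
    div_zero, sub_zero, add_zero]
  linear_combination -I * hgeom

theorem sum_diffKernel_zero {N : ℕ} (hN : Odd N) : ∑ d ∈ range N, diffKernel N 0 d = 0 := by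
  have h := (diffKernel_intCast_periodic hN 0).sum_range_neg
  simp only [Int.cast_neg, diffKernel_zero_neg, sum_neg_distrib] at h
  exact_mod_cast self_eq_neg.mp h.symm

theorem sum_diffKernel {n : ℕ} {m : ℤ} (hm : |m| ≤ n) :
    ∑ d ∈ range (2 * n + 1), diffKernel (2 * n + 1) m d = I * m := by
  rw [abs_le] at hm
  induction m using Int.inductionOn' (b := 0) with
  | zero => simpa using sum_diffKernel_zero (odd_two_mul_add_one n)
  | succ m _ ih =>
    rw [sum_diffKernel_succ (by omega) (by omega), ih ⟨by omega, by omega⟩]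
    push_cast
    ring
  | pred m _ ih =>
    have h := sum_diffKernel_succ (n := n) (m := m - 1) (by omega) (by omega)
    rw [sub_add_cancel, ih ⟨by omega, by omega⟩] at h
    push_cast
    linear_combination -h

theorem exp_eigenvector (n : ℕ) (m : ℤ) (hm : |m| ≤ (n : ℤ))
    (v : Fin (2 * n + 1) → ℂ)
    (hv : ∀ j, v j = Complex.exp (Complex.I * m * (node (2 * n + 1) j : ℝ))) :
    (Dmat (2 * n + 1)).mulVec v = (Complex.I * m) • v := by
  ext j
  have hshift := (diffKernel_intCast_periodic (odd_two_mul_add_one n) m).sum_range_add (-j)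
  push_cast [← sub_eq_add_neg] at hshift
  simp only [Matrix.mulVec, dotProduct, hv, Dmat_mul_exp_node, ← mul_sum, Pi.smul_apply,
    smul_eq_mul]
  rw [Fin.sum_univ_eq_sum_range (fun k => diffKernel _ m ((k : ℝ) - j)), hshift, sum_diffKernel hm]
  ring
end

section
/- Let N = 2n+1 be odd and D the equispaced trigonometric differentiation matrix on nodes t_j = -π + 2πj/N. If x(t) is a trigonometric polynomial of degree at most n, then the vector with entries x'(t_j) equals D applied to the vector with entries x(t_j). -/
open Real Finset

/-- `x` is a trigonometric polynomial of degree at most `n` (complex coefficients). -/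
def IsTrigPoly (n : ℕ) (x : ℝ → ℂ) : Prop :=
  ∃ a b : ℕ → ℂ, ∀ t : ℝ,
    x t = a 0 + ∑ m ∈ Finset.Icc 1 n,
      (a m * (Real.cos (m * t) : ℝ) + b m * (Real.sin (m * t) : ℝ))

/-!
Put `ω = exp(2πi/N)`. Writing `2 sin θ` and `(-1)^(j+k)` through `z = exp(iπ(j-k)/N)`, whose square
is `ω^(j-k)`, turns the entry `D_{jk}` into `i y^(n+1) / (y - 1)` with `y = ω^(j-k)` (both sides are
`0` on the diagonal). As `e^{imt_k} = e^{imt_j} y^(-m)`, applying `D` to the samples of `e^{imt}`,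
`|m| ≤ n`, gives `i e^{imt_j}` times `∑_{d=1}^{N-1} ω^{rd} / (ω^d - 1)` with `r = n + 1 - m`.
Raising `r` by one adds the geometric sum `∑_{d=1}^{N-1} ω^{rd}`, which is `N - 1` for `r = 0` and
`-1` for `0 < r < N`, and at `r = 0` the sum is `(1 - N) / 2` by pairing `d` with `N - d`; so it
equals `(N + 1) / 2 - r = m`. Thus `D` differentiates each `e^{imt}`, `|m| ≤ n`, exactly at the
nodes, and the theorem follows by linearity since `cos mt` and `sin mt` are combinations of
`e^{±imt}`.
-/

open scoped Complex Matrix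
open Complex (I)

section PrimitiveRoot

variable {K : Type*} [Field K]

theorem inv_sub_one_add_inv_inv_sub_one {x : K} (hx₀ : x ≠ 0) (hx₁ : x ≠ 1) :
    1 / (x - 1) + 1 / (x⁻¹ - 1) = -1 := by
  have : x - 1 ≠ 0 := sub_ne_zero.mpr hx₁
  have : 1 - x ≠ 0 := sub_ne_zero.mpr hx₁.symm
  field_simp
  ring

theorem pow_succ_div_sub_one {x : K} (hx : x ≠ 1) (r : ℕ) :
    x ^ (r + 1) / (x - 1) = x ^ r / (x - 1) + x ^ r := by
  field_simp [sub_ne_zero.mpr hx]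
  ring

namespace IsPrimitiveRoot

variable {ω : K} {N : ℕ}

theorem sum_Ico_pow_pow (hω : IsPrimitiveRoot ω N) {r : ℕ} (hr : 0 < r) (hrN : r < N) :
    ∑ d ∈ Ico 1 N, (ω ^ d) ^ r = -1 := by
  have hgeom := geom_sum_eq (hω.pow_ne_one_of_pos_of_lt hr.ne' hrN) N
  rw [← pow_mul, mul_comm, pow_mul, hω.pow_eq_one, one_pow, sub_self, zero_div,
    sum_range_eq_add_Ico _ (by omega)] at hgeom
  simp_rw [← pow_mul, mul_comm _ r, pow_mul]
  linear_combination hgeom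

theorem sum_Ico_pow_succ_div (hω : IsPrimitiveRoot ω N) (r : ℕ) :
    ∑ d ∈ Ico 1 N, (ω ^ d) ^ (r + 1) / (ω ^ d - 1) =
      ∑ d ∈ Ico 1 N, (ω ^ d) ^ r / (ω ^ d - 1) + ∑ d ∈ Ico 1 N, (ω ^ d) ^ r := by
  rw [← sum_add_distrib]
  refine sum_congr rfl fun d hd => ?_
  rw [mem_Ico] at hd
  exact pow_succ_div_sub_one (hω.pow_ne_one_of_pos_of_lt (by omega) hd.2) r

theorem two_mul_sum_Ico_inv_pow_sub_one (hω : IsPrimitiveRoot ω N) (hN : 0 < N) :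
    2 * ∑ d ∈ Ico 1 N, 1 / (ω ^ d - 1) = 1 - N := by
  have hreflect : ∑ d ∈ Ico 1 N, 1 / (ω ^ (N - d) - 1) = ∑ d ∈ Ico 1 N, 1 / (ω ^ d - 1) := by
    rw [sum_Ico_reflect (fun d => 1 / (ω ^ d - 1)) 1 (Nat.le_succ N), Nat.add_sub_cancel_left,
      Nat.add_sub_cancel]
  have hpair : ∀ d ∈ Ico 1 N, 1 / (ω ^ d - 1) + 1 / (ω ^ (N - d) - 1) = -1 := by
    intro d hd
    rw [mem_Ico] at hd
    have hinv : ω ^ (N - d) = (ω ^ d)⁻¹ := by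
      refine eq_inv_of_mul_eq_one_left ?_
      rw [← pow_add, Nat.sub_add_cancel hd.2.le, hω.pow_eq_one]
    rw [hinv]
    exact inv_sub_one_add_inv_inv_sub_one (pow_ne_zero _ (hω.ne_zero hN.ne'))
      (hω.pow_ne_one_of_pos_of_lt (by omega) hd.2)
  rw [two_mul]
  nth_rewrite 2 [← hreflect]
  rw [← sum_add_distrib, sum_congr rfl hpair, sum_const, Nat.card_Ico,
    nsmul_eq_mul, Nat.cast_sub hN]
  ring

theorem two_mul_sum_Ico_pow_pow_div (hω : IsPrimitiveRoot ω N) {r : ℕ} (hr : 1 ≤ r)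
    (hrN : r ≤ N) : 2 * ∑ d ∈ Ico 1 N, (ω ^ d) ^ r / (ω ^ d - 1) = N + 1 - 2 * r := by
  induction r, hr using Nat.le_induction with
  | base =>
    have hS := hω.two_mul_sum_Ico_inv_pow_sub_one hrN
    rw [hω.sum_Ico_pow_succ_div 0]
    simp only [pow_zero, sum_const, Nat.card_Ico, nsmul_eq_mul, mul_one] at hS ⊢
    rw [Nat.cast_sub hrN]
    linear_combination hS
  | succ r hr ih =>
    rw [hω.sum_Ico_pow_succ_div, hω.sum_Ico_pow_pow (by omega) (by omega)]
    push_cast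
    linear_combination ih (by omega)

end IsPrimitiveRoot

end PrimitiveRoot

theorem zpow_sub_eq_pow_val_sub {G₀ : Type*} [GroupWithZero G₀] {ω : G₀} {N : ℕ}
    (hω : ω ^ N = 1) (j k : Fin N) : ω ^ ((j : ℤ) - k) = ω ^ (j - k : Fin N).val := by
  rcases le_or_gt k j with hkj | hjk
  · rw [Fin.coe_sub_iff_le.mpr hkj, ← zpow_natCast, Nat.cast_sub hkj]
  · have hω₀ : ω ≠ 0 := by
      rintro rfl
      simp [(Fin.pos j).ne'] at hω
    rw [Fin.coe_sub_iff_lt.mpr hjk, ← zpow_natCast, Nat.cast_sub (by omega), Nat.cast_add,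
      show (N : ℤ) + j - k = ((j : ℤ) - k) + N by ring, zpow_add₀ hω₀, zpow_natCast, hω, mul_one]

theorem sum_fin_zpow_sub_eq_sum_range {G₀ M : Type*} [GroupWithZero G₀] [AddCommMonoid M]
    {ω : G₀} {N : ℕ} (hω : ω ^ N = 1) (f : G₀ → M) (j : Fin N) :
    ∑ k : Fin N, f (ω ^ ((j : ℤ) - k)) = ∑ d ∈ range N, f (ω ^ d) := by
  have : NeZero N := ⟨(Fin.pos j).ne'⟩
  simp_rw [zpow_sub_eq_pow_val_sub hω j]
  exact (Fintype.sum_equiv (Equiv.subLeft j) _ (fun v => f (ω ^ v.val)) fun k => rfl).trans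
    (Fin.sum_univ_eq_sum_range (fun d => f (ω ^ d)) N)

/-- The diagonal of `Dmat` is the value `1 / 0 = 0` of its off-diagonal formula. -/
theorem Dmat_apply (N : ℕ) (j k : Fin N) :
    Dmat N j k = (-1 : ℂ) ^ (j.1 + k.1) / (2 * (Real.sin (π * ((j.1 : ℝ) - k.1) / N) : ℂ)) := by
  rw [Dmat]
  split_ifs with h
  · simp [h]
  · rfl

theorem two_mul_ofReal_sin (θ : ℝ) :
    2 * (Real.sin θ : ℂ) = ((cexp (θ * I))⁻¹ - cexp (θ * I)) * I := by
  rw [Complex.ofReal_sin, Complex.sin, ← Complex.exp_neg, neg_mul]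
  ring

theorem pow_two_mul_add_one_div_inv_sub_mul_I (z : ℂ) (n : ℕ) :
    z ^ (2 * n + 1) / ((z⁻¹ - z) * I) = I * (z ^ 2) ^ (n + 1) / (z ^ 2 - 1) := by
  by_cases hz2 : z ^ 2 = 1
  · have : z⁻¹ = z := inv_eq_of_mul_eq_one_left (by rw [← sq, hz2])
    simp [this, hz2]
  · have : z ^ 2 - 1 ≠ 0 := sub_ne_zero.mpr hz2
    have : 1 - z ^ 2 ≠ 0 := sub_ne_zero.mpr (Ne.symm hz2)
    field_simp
    ring_nf
    simp only [Complex.I_sq]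
    ring

noncomputable def unitRoot (N : ℕ) : ℂ := cexp (2 * π * I / N)

theorem isPrimitiveRoot_unitRoot {N : ℕ} (hN : N ≠ 0) : IsPrimitiveRoot (unitRoot N) N :=
  Complex.isPrimitiveRoot_exp N hN

theorem Dmat_apply_eq_unitRoot (n : ℕ) (j k : Fin (2 * n + 1)) :
    Dmat (2 * n + 1) j k = I * (unitRoot (2 * n + 1) ^ ((j : ℤ) - k)) ^ (n + 1) /
      (unitRoot (2 * n + 1) ^ ((j : ℤ) - k) - 1) := by
  set z := cexp ((π * ((j.1 : ℝ) - k.1) / (2 * n + 1 : ℕ) : ℝ) * I)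
  have hN : 2 * (n : ℂ) + 1 ≠ 0 := by exact_mod_cast (by omega : 2 * n + 1 ≠ 0)
  have hparity : (-1 : ℂ) ^ (j.1 + k.1) = (-1) ^ ((j : ℤ) - k) := by
    have : ((j.1 + k.1 : ℕ) : ℤ) = ((j : ℤ) - k) + 2 * k := by push_cast; ring
    rw [← zpow_natCast, this, zpow_add₀ (by norm_num), zpow_mul]
    norm_num
  have hsign : (-1 : ℂ) ^ (j.1 + k.1) = z ^ (2 * n + 1) := by
    rw [hparity, ← Complex.exp_nat_mul, ← Complex.exp_pi_mul_I, ← Complex.exp_int_mul]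
    congr 1
    push_cast
    field_simp
  have hroot : unitRoot (2 * n + 1) ^ ((j : ℤ) - k) = z ^ 2 := by
    rw [unitRoot, ← Complex.exp_int_mul, ← Complex.exp_nat_mul]
    congr 1
    push_cast
    field_simp
  rw [Dmat_apply, two_mul_ofReal_sin, hsign, hroot]
  exact pow_two_mul_add_one_div_inv_sub_mul_I z n

theorem exp_mul_node (m : ℤ) {N : ℕ} (j k : Fin N) :
    cexp (I * m * node N k) = cexp (I * m * node N j) * (unitRoot N ^ ((j : ℤ) - k)) ^ (-m) := by
  have hN : (N : ℂ) ≠ 0 := Nat.cast_ne_zero.mpr (Fin.pos j).ne'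
  rw [unitRoot, ← zpow_mul, ← Complex.exp_int_mul, ← Complex.exp_add]
  congr 1
  simp only [node]
  push_cast
  field_simp
  ring

theorem Dmat_mulVec_exp (n : ℕ) {m : ℤ} (hm : |m| ≤ n) :
    Dmat (2 * n + 1) *ᵥ (fun k => cexp (I * m * node (2 * n + 1) k)) =
      fun j => I * m * cexp (I * m * node (2 * n + 1) j) := by
  obtain ⟨hm₁, hm₂⟩ := abs_le.mp hm
  set ω := unitRoot (2 * n + 1)
  have hω := isPrimitiveRoot_unitRoot (N := 2 * n + 1) (by omega)
  obtain ⟨r, hr⟩ : ∃ r : ℕ, (r : ℤ) = n + 1 - m := ⟨(n + 1 - m).toNat, by omega⟩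
  ext j
  have hterm : ∀ k, Dmat (2 * n + 1) j k * cexp (I * m * node (2 * n + 1) k) =
      I * cexp (I * m * node (2 * n + 1) j) *
        ((ω ^ ((j : ℤ) - k)) ^ r / (ω ^ ((j : ℤ) - k) - 1)) := by
    intro k
    have hy : ω ^ ((j : ℤ) - k) ≠ 0 := zpow_ne_zero _ (hω.ne_zero (by omega))
    have hpow : (ω ^ ((j : ℤ) - k)) ^ (n + 1) * (ω ^ ((j : ℤ) - k)) ^ (-m) =
        (ω ^ ((j : ℤ) - k)) ^ r := by
      rw [← zpow_natCast, ← zpow_add₀ hy, ← zpow_natCast, hr]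
      push_cast
      ring_nf
    rw [Dmat_apply_eq_unitRoot, exp_mul_node m j k, ← hpow]
    ring
  have hsum := hω.two_mul_sum_Ico_pow_pow_div (r := r) (by omega) (by omega)
  simp only [Matrix.mulVec, dotProduct]
  rw [sum_congr rfl fun k _ => hterm k, ← mul_sum,
    sum_fin_zpow_sub_eq_sum_range hω.pow_eq_one (fun y => y ^ r / (y - 1)),
    sum_range_eq_add_Ico _ (by omega)]
  -- the `d = 0` term is `1 / 0 = 0`
  simp only [pow_zero, one_pow, sub_self, div_zero, zero_add]
  have hrC : (r : ℂ) = n + 1 - m := by exact_mod_cast hr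
  push_cast at hsum
  linear_combination (I * cexp (I * m * node (2 * n + 1) j) / 2) * hsum -
    I * cexp (I * m * node (2 * n + 1) j) * hrC

def derivExactAtNodes (N : ℕ) : Submodule ℂ (ℝ → ℂ) where
  carrier := {f | Differentiable ℝ f ∧
    (fun j => deriv f (node N j)) = Dmat N *ᵥ fun j => f (node N j)}
  add_mem' := by
    rintro f g ⟨hf, hf'⟩ ⟨hg, hg'⟩
    refine ⟨hf.add hg, ?_⟩
    change _ = Dmat N *ᵥ ((fun j => f (node N j)) + fun j => g (node N j))
    rw [Matrix.mulVec_add, ← hf', ← hg']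
    exact funext fun j => deriv_add (hf _) (hg _)
  zero_mem' := ⟨differentiable_const 0, by
    simp only [deriv_zero, Pi.zero_apply]
    exact (Matrix.mulVec_zero (Dmat N)).symm⟩
  smul_mem' := by
    rintro c f ⟨hf, hf'⟩
    refine ⟨hf.const_smul c, ?_⟩
    change _ = Dmat N *ᵥ (c • fun j => f (node N j))
    rw [Matrix.mulVec_smul, ← hf']
    exact funext fun j => deriv_const_smul c (hf _)

theorem exp_mem_derivExactAtNodes (n : ℕ) {m : ℤ} (hm : |m| ≤ n) :
    (fun t : ℝ => cexp (I * m * t)) ∈ derivExactAtNodes (2 * n + 1) := by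
  have hderiv (t : ℝ) :
      HasDerivAt (fun t : ℝ => cexp (I * m * t)) (I * m * cexp (I * m * t)) t := by
    simpa [mul_comm] using (((hasDerivAt_id (t : ℂ)).const_mul (I * m)).cexp).comp_ofReal
  refine ⟨fun t => (hderiv t).differentiableAt, ?_⟩
  simp only [(hderiv _).deriv]
  exact (Dmat_mulVec_exp n hm).symm

theorem cos_mem_derivExactAtNodes {n m : ℕ} (hm : m ≤ n) :
    (fun t : ℝ => (Real.cos (m * t) : ℂ)) ∈ derivExactAtNodes (2 * n + 1) := by
  have hcos : (fun t : ℝ => (Real.cos (m * t) : ℂ)) =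
      (1 / 2 : ℂ) • ((fun t : ℝ => cexp (I * (m : ℤ) * t)) +
        fun t : ℝ => cexp (I * (-m : ℤ) * t)) := by
    funext t
    simp only [Complex.ofReal_cos, Complex.cos, Pi.add_apply, Pi.smul_apply, smul_eq_mul]
    push_cast
    ring_nf
  rw [hcos]
  refine Submodule.smul_mem _ _ (Submodule.add_mem _ ?_ ?_) <;>
    exact exp_mem_derivExactAtNodes n (by simpa using hm)

theorem sin_mem_derivExactAtNodes {n m : ℕ} (hm : m ≤ n) :
    (fun t : ℝ => (Real.sin (m * t) : ℂ)) ∈ derivExactAtNodes (2 * n + 1) := by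
  have hsin : (fun t : ℝ => (Real.sin (m * t) : ℂ)) =
      (I / 2) • ((fun t : ℝ => cexp (I * (-m : ℤ) * t)) -
        fun t : ℝ => cexp (I * (m : ℤ) * t)) := by
    funext t
    simp only [Complex.ofReal_sin, Complex.sin, Pi.sub_apply, Pi.smul_apply, smul_eq_mul]
    push_cast
    ring_nf
  rw [hsin]
  refine Submodule.smul_mem _ _ (Submodule.sub_mem _ ?_ ?_) <;>
    exact exp_mem_derivExactAtNodes n (by simpa using hm)

theorem IsTrigPoly.mem_derivExactAtNodes {n : ℕ} {x : ℝ → ℂ} (hx : IsTrigPoly n x) :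
    x ∈ derivExactAtNodes (2 * n + 1) := by
  obtain ⟨a, b, hab⟩ := hx
  have hx : x = a 0 • (fun t : ℝ => cexp (I * (0 : ℤ) * t)) + ∑ m ∈ Icc 1 n,
      (a m • (fun t : ℝ => (Real.cos (m * t) : ℂ)) +
        b m • fun t : ℝ => (Real.sin (m * t) : ℂ)) := by
    funext t
    simp [hab t, Finset.sum_apply]
  rw [hx]
  refine Submodule.add_mem _ (Submodule.smul_mem _ _ (exp_mem_derivExactAtNodes n (by simp)))
    (Submodule.sum_mem _ fun m hm => Submodule.add_mem _ ?_ ?_)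
  · exact Submodule.smul_mem _ _ (cos_mem_derivExactAtNodes (mem_Icc.mp hm).2)
  · exact Submodule.smul_mem _ _ (sin_mem_derivExactAtNodes (mem_Icc.mp hm).2)

theorem deriv_samples_eq_mulVec (n : ℕ) (x : ℝ → ℂ) (hx : IsTrigPoly n x) :
    (fun j : Fin (2 * n + 1) => deriv x (node (2 * n + 1) j)) =
      (Dmat (2 * n + 1)).mulVec (fun j => x (node (2 * n + 1) j)) :=
  hx.mem_derivExactAtNodes.2
end

section
/- Let N = 2n+1 be odd and D the equispaced trigonometric differentiation matrix. If x(t) is a trigonometric polynomial of degree at most n, then for every k ≥ 0 the vector of k-th derivative values (x^{(k)}(t_1), …, x^{(k)}(t_N)) equals D^k applied to the vector (x(t_1), …, x(t_N)). -/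
open Real Finset

/-!
For `|m| ≤ n` the samples of `t ↦ exp (i m t)` at the nodes form an eigenvector of `Dmat (2n+1)`
with eigenvalue `i m`. Indeed `D_{jk} exp (i m t_k) = exp (i m t_j) φ(k - j)` for a kernel `φ`
that is `N`-periodic because `N` is odd, so every row sum is
`Σ_{p<N} φ(p) = i S(r)`, `S(r) = Σ_{p<N} ω^{rp} / (1 - ω^p)`, with `ω = exp (2πi/N)` and
`r = n + 1 + m`. Now `S(r+1) = S(r) + 1` for `0 < r < N`, `S(1) = S(0) + 1 - N`, and the
symmetry `p ↦ -p` gives `S(0) = -S(1)`; hence `S(r) = r - (n + 1) = m`.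
A trigonometric polynomial of degree `≤ n` is a combination of these exponentials, and both sides
of the theorem are linear in smooth `x`.
-/

open Complex
open scoped Matrix

theorem sum_range_comp_inv_pow_of_pow_eq_one {G M : Type*} [DivisionMonoid G] [AddCommMonoid M]
    {ω : G} {N : ℕ} (hω : ω ^ N = 1) (f : G → M) :
    ∑ p ∈ range N, f (ω ^ p)⁻¹ = ∑ p ∈ range N, f (ω ^ p) := by
  have hshift : ∑ p ∈ range N, f (ω ^ (p + 1)) = ∑ p ∈ range N, f (ω ^ p) := by
    cases N with
    | zero => simp
    | succ M => rw [sum_range_succ, hω, sum_range_succ' _ M, pow_zero, add_comm]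
  rw [← hshift, ← sum_range_reflect]
  refine sum_congr rfl fun p hp => congrArg f (inv_eq_of_mul_eq_one_left ?_)
  rw [← pow_add, ← hω]
  congr 1
  have := mem_range.mp hp
  omega

section RootsOfUnity

variable {K : Type*} [Field K] {ω : K} {N : ℕ}

-- In these sums the `p = 0` summand contains the factor `(1 - ω ^ 0)⁻¹ = 0⁻¹ = 0`.

theorem IsPrimitiveRoot.sum_range_pow_mul_eq_zero (hω : IsPrimitiveRoot ω N) {s : ℕ}
    (hs₀ : s ≠ 0) (hsN : s < N) : ∑ p ∈ range N, ω ^ (s * p) = 0 := by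
  simp only [pow_mul]
  rw [geom_sum_eq (hω.pow_ne_one_of_pos_of_lt hs₀ hsN), ← pow_mul, mul_comm, pow_mul,
    hω.pow_eq_one, one_pow, sub_self, zero_div]

theorem IsPrimitiveRoot.sum_pow_mul_inv_one_sub_pow_succ (hω : IsPrimitiveRoot ω N) (hN : 0 < N)
    (s : ℕ) :
    ∑ p ∈ range N, ω ^ ((s + 1) * p) * (1 - ω ^ p)⁻¹ =
      ∑ p ∈ range N, ω ^ (s * p) * (1 - ω ^ p)⁻¹ + 1 - ∑ p ∈ range N, ω ^ (s * p) := by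
  have hterm : ∀ p ∈ range N, ω ^ (s * p) * (1 - ω ^ p)⁻¹ - ω ^ ((s + 1) * p) * (1 - ω ^ p)⁻¹
      = ω ^ (s * p) - if p = 0 then 1 else 0 := by
    intro p hp
    rcases eq_or_ne p 0 with rfl | hp₀
    · simp
    have h1 : 1 - ω ^ p ≠ 0 :=
      sub_ne_zero.mpr (hω.pow_ne_one_of_pos_of_lt hp₀ (mem_range.mp hp)).symm
    rw [if_neg hp₀, sub_zero, add_mul, one_mul, pow_add, ← sub_mul, ← mul_one_sub,
      mul_assoc, mul_inv_cancel₀ h1, mul_one]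
  have h := sum_congr rfl hterm
  rw [sum_sub_distrib, sum_sub_distrib, sum_ite_eq' (range N) 0, if_pos (mem_range.mpr hN)] at h
  linear_combination -h

theorem IsPrimitiveRoot.sum_pow_mul_inv_one_sub_pow_one (hω : IsPrimitiveRoot ω N) (hN : 0 < N) :
    ∑ p ∈ range N, ω ^ p * (1 - ω ^ p)⁻¹ = ∑ p ∈ range N, (1 - ω ^ p)⁻¹ + 1 - N := by
  simpa using hω.sum_pow_mul_inv_one_sub_pow_succ hN 0

theorem IsPrimitiveRoot.two_mul_sum_inv_one_sub_pow (hω : IsPrimitiveRoot ω N) (hN : 0 < N) :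
    2 * ∑ p ∈ range N, (1 - ω ^ p)⁻¹ = N - 1 := by
  have hsucc := hω.sum_pow_mul_inv_one_sub_pow_one hN
  have hreflect : ∑ p ∈ range N, (1 - ω ^ p)⁻¹ = -∑ p ∈ range N, ω ^ p * (1 - ω ^ p)⁻¹ := by
    rw [← sum_range_comp_inv_pow_of_pow_eq_one hω.pow_eq_one (fun x : K => (1 - x)⁻¹),
      ← sum_neg_distrib]
    refine sum_congr rfl fun p _ => ?_
    have hp : ω ^ p ≠ 0 := pow_ne_zero _ (hω.ne_zero hN.ne')
    rcases eq_or_ne (ω ^ p) 1 with h1 | h1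
    · simp [h1]
    · have hsub : 1 - ω ^ p ≠ 0 := sub_ne_zero.mpr h1.symm
      field_simp
      ring
  linear_combination hreflect - hsucc

theorem IsPrimitiveRoot.two_mul_sum_pow_mul_inv_one_sub_pow (hω : IsPrimitiveRoot ω N) {r : ℕ}
    (hr₁ : 1 ≤ r) (hrN : r ≤ N) :
    2 * ∑ p ∈ range N, ω ^ (r * p) * (1 - ω ^ p)⁻¹ = 2 * r - N - 1 := by
  have hN : 0 < N := by omega
  induction r, hr₁ using Nat.le_induction with
  | base =>
    simp only [one_mul]
    linear_combination
      2 * hω.sum_pow_mul_inv_one_sub_pow_one hN + hω.two_mul_sum_inv_one_sub_pow hN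
  | succ r hr ih =>
    rw [hω.sum_pow_mul_inv_one_sub_pow_succ hN r,
      hω.sum_range_pow_mul_eq_zero (by omega) (by omega)]
    push_cast
    linear_combination ih (by omega)

end RootsOfUnity

theorem Function.Periodic.sum_fin_sub {α M : Type*} [Ring α] [AddCommMonoid M] {f : α → M}
    {N : ℕ} [NeZero N] (hf : Function.Periodic f N) (j : Fin N) :
    ∑ k : Fin N, f (k - j) = ∑ k : Fin N, f k := by
  calc ∑ k : Fin N, f (k - j) = ∑ k : Fin N, f ((k - j : Fin N) : ℕ) := by
        refine sum_congr rfl fun k _ => ?_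
        rcases le_or_gt j k with h | h
        · rw [Fin.coe_sub_iff_le.mpr h, Nat.cast_sub h]
        · rw [Fin.coe_sub_iff_lt.mpr h, Nat.cast_sub (by omega), Nat.cast_add, add_sub_assoc,
            add_comm (N : α), hf]
    _ = ∑ k : Fin N, f k := Equiv.sum_comp (Equiv.subRight j) (fun k : Fin N => f (k : ℕ))

theorem pow_mulVec_of_mulVec_eq_smul {ι R : Type*} [Fintype ι] [DecidableEq ι] [CommSemiring R]
    {A : Matrix ι ι R} {v : ι → R} {c : R} (h : A *ᵥ v = c • v) (k : ℕ) :
    (A ^ k) *ᵥ v = c ^ k • v := by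
  induction k with
  | zero => simp
  | succ k ih =>
    rw [pow_succ, ← Matrix.mulVec_mulVec, h, Matrix.mulVec_smul, ih, smul_smul, pow_succ']

-- At `s = 0` the denominator vanishes and `x / 0 = 0` matches the zero diagonal of `Dmat`.
noncomputable def dmatKernel (N : ℕ) (m : ℤ) (s : ℝ) : ℂ :=
  cexp (π * (N + 2 * m) * s / N * I) / (2 * (Real.sin (π * -s / N) : ℂ))

theorem Dmat_apply_mul_cexp_node (N : ℕ) (m : ℤ) (j k : Fin N) :
    Dmat N j k * cexp (m * I * node N k) =
      cexp (m * I * node N j) * dmatKernel N m ((k : ℝ) - j) := by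
  by_cases hjk : j = k
  · subst hjk
    simp [Dmat, dmatKernel]
  have hexp : (-1 : ℂ) ^ (j.1 + k.1) * cexp (m * I * node N k) =
      cexp (m * I * node N j) * cexp (π * (N + 2 * m) * ((k : ℝ) - j : ℝ) / N * I) := by
    rw [← exp_pi_mul_I, ← Complex.exp_nat_mul, ← Complex.exp_add, ← Complex.exp_add,
      exp_eq_exp_iff_exists_int]
    refine ⟨j, ?_⟩
    rcases eq_or_ne N 0 with rfl | hN
    · exact j.elim0
    simp only [node]
    push_cast
    field_simp
    ring
  rw [Dmat, if_neg hjk, dmatKernel, div_mul_eq_mul_div, hexp, mul_div_assoc, neg_sub]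

theorem periodic_dmatKernel {N : ℕ} (hN : Odd N) (m : ℤ) :
    Function.Periodic (dmatKernel N m) N := by
  intro s
  have hN₀ : (N : ℂ) ≠ 0 := by exact_mod_cast hN.pos.ne'
  have hsign : cexp (π * (N + 2 * m) * I) = -1 := by
    rw [show (π * (N + 2 * m) * I : ℂ) = ((N + 2 * m : ℤ) : ℂ) * (π * I) by push_cast; ring,
      exp_int_mul, exp_pi_mul_I, Odd.neg_one_zpow]
    exact (hN.natCast (R := ℤ)).add_even (even_two_mul m)
  have hexp : cexp (π * (N + 2 * m) * (s + N : ℝ) / N * I) =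
      -cexp (π * (N + 2 * m) * s / N * I) := by
    rw [← neg_one_mul, ← hsign, ← Complex.exp_add]
    congr 1
    push_cast
    field_simp
    ring
  have hsin : Real.sin (π * -(s + N) / N) = -Real.sin (π * -s / N) := by
    rw [← Real.sin_sub_pi]
    congr 1
    field_simp [show (N : ℝ) ≠ 0 by exact_mod_cast hN.pos.ne']
    ring
  rw [dmatKernel, dmatKernel, hexp, hsin, ofReal_neg, mul_neg, neg_div_neg_eq]

theorem dmatKernel_eq_mul_inv_one_sub (N : ℕ) (m : ℤ) (s : ℝ) :
    dmatKernel N m s =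
      I * cexp (π * (N + 2 * m + 1) * s / N * I) * (1 - cexp (2 * π * s / N * I))⁻¹ := by
  set u := cexp (π * s / N * I)
  have hu : u ≠ 0 := Complex.exp_ne_zero _
  have hsin : 2 * (Real.sin (π * -s / N) : ℂ) = -I * u⁻¹ * (1 - u ^ 2) := by
    have e1 : cexp (-(π * -s / N : ℝ) * I) = u := by congr 1; push_cast; ring
    have e2 : cexp ((π * -s / N : ℝ) * I) = u⁻¹ := by
      rw [← Complex.exp_neg]; congr 1; push_cast; ring
    rw [ofReal_sin, two_sin, e1, e2]
    field_simp
    ring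
  have hsq : cexp (2 * π * s / N * I) = u ^ 2 := by
    rw [← Complex.exp_nat_mul]; congr 1; push_cast; ring
  have hshift :
      cexp (π * (N + 2 * m + 1) * s / N * I) = cexp (π * (N + 2 * m) * s / N * I) * u := by
    rw [← Complex.exp_add]; congr 1; ring
  rw [dmatKernel, hsin, hsq, hshift, div_eq_mul_inv, mul_inv, mul_inv, inv_inv, inv_neg,
    Complex.inv_I, neg_neg]
  ring

theorem Dmat_mulVec_cexp_node {n : ℕ} {m : ℤ} (hm₁ : -(n : ℤ) ≤ m) (hm₂ : m ≤ n) :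
    Dmat (2 * n + 1) *ᵥ (fun j => cexp (m * I * node (2 * n + 1) j)) =
      (m * I) • fun j => cexp (m * I * node (2 * n + 1) j) := by
  set N := 2 * n + 1 with hN
  obtain ⟨r, hr⟩ : ∃ r : ℕ, (r : ℤ) = n + 1 + m := ⟨(n + 1 + m).toNat, by omega⟩
  have hr' : (r : ℂ) = n + 1 + m := by exact_mod_cast hr
  set ω := cexp (2 * π * I / N)
  have hω : IsPrimitiveRoot ω N := Complex.isPrimitiveRoot_exp N (by omega)
  have hkernel : ∀ p : ℕ, dmatKernel N m p = I * (ω ^ (r * p) * (1 - ω ^ p)⁻¹) := by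
    intro p
    have hN₀ : (N : ℂ) ≠ 0 := Nat.cast_ne_zero.mpr (by omega)
    have e1 : cexp (π * (N + 2 * m + 1) * (p : ℝ) / N * I) = ω ^ (r * p) := by
      rw [← Complex.exp_nat_mul]
      congr 1
      push_cast [hr']
      field_simp
      push_cast [hN]
      ring
    have e2 : cexp (2 * π * (p : ℝ) / N * I) = ω ^ p := by
      rw [← Complex.exp_nat_mul]
      congr 1
      push_cast
      ring
    rw [dmatKernel_eq_mul_inv_one_sub, e1, e2, mul_assoc]
  have hsum : ∑ p ∈ range N, ω ^ (r * p) * (1 - ω ^ p)⁻¹ = m := by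
    have h := hω.two_mul_sum_pow_mul_inv_one_sub_pow (r := r) (by omega) (by omega)
    rw [hr', hN] at h
    push_cast at h
    linear_combination h / 2
  funext j
  simp only [Matrix.mulVec, dotProduct, Pi.smul_apply, smul_eq_mul]
  calc ∑ k, Dmat N j k * cexp (m * I * node N k)
      = cexp (m * I * node N j) * ∑ k : Fin N, dmatKernel N m ((k : ℝ) - j) := by
        simp_rw [Dmat_apply_mul_cexp_node, mul_sum]
    _ = cexp (m * I * node N j) * ∑ p ∈ range N, dmatKernel N m p := by
        rw [(periodic_dmatKernel (odd_two_mul_add_one n) m).sum_fin_sub j,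
          Fin.sum_univ_eq_sum_range (fun p => dmatKernel N m p)]
    _ = m * I * cexp (m * I * node N j) := by
        simp_rw [hkernel, ← mul_sum, hsum]
        ring

theorem iteratedDeriv_cexp_mul_ofReal (c : ℂ) (k : ℕ) :
    iteratedDeriv k (fun t : ℝ => cexp (c * t)) = fun t : ℝ => c ^ k * cexp (c * t) := by
  induction k with
  | zero => simp
  | succ k ih =>
    rw [iteratedDeriv_succ, ih]
    funext t
    have h : HasDerivAt (fun s : ℝ => c ^ k * cexp (c * s)) (c ^ k * (cexp (c * t) * c)) t := by
      simpa using (((hasDerivAt_id (t : ℂ)).const_mul c).cexp.comp_ofReal).const_mul (c ^ k)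
    rw [h.deriv]
    ring

def cexpModes (n : ℕ) : Set (ℝ → ℂ) :=
  (fun (m : ℤ) (t : ℝ) => cexp (m * I * t)) '' Set.Icc (-n : ℤ) n

theorem iteratedDeriv_node_eq_pow_mulVec_of_mem_span {n : ℕ} {x : ℝ → ℂ}
    (hx : x ∈ Submodule.span ℂ (cexpModes n)) (k : ℕ) :
    (fun j => iteratedDeriv k x (node (2 * n + 1) j)) =
      (Dmat (2 * n + 1) ^ k) *ᵥ fun j => x (node (2 * n + 1) j) := by
  suffices ContDiff ℝ ⊤ x ∧ ∀ k : ℕ, (fun j => iteratedDeriv k x (node (2 * n + 1) j)) =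
      (Dmat (2 * n + 1) ^ k) *ᵥ fun j => x (node (2 * n + 1) j) from this.2 k
  induction hx using Submodule.span_induction with
  | mem f hf =>
    obtain ⟨m, ⟨hm₁, hm₂⟩, rfl⟩ := hf
    refine ⟨(contDiff_const.mul ofRealCLM.contDiff).cexp, fun k => ?_⟩
    rw [pow_mulVec_of_mulVec_eq_smul (Dmat_mulVec_cexp_node hm₁ hm₂),
      iteratedDeriv_cexp_mul_ofReal]
    rfl
  | zero =>
    exact ⟨contDiff_const, fun k => by ext j; simp [Matrix.mulVec, dotProduct]⟩
  | add f g _ _ hf hg =>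
    refine ⟨hf.1.add hg.1, fun k => ?_⟩
    have hsplit : (fun j => iteratedDeriv k (f + g) (node (2 * n + 1) j)) =
        (fun j => iteratedDeriv k f (node (2 * n + 1) j)) +
          fun j => iteratedDeriv k g (node (2 * n + 1) j) :=
      funext fun j =>
        iteratedDeriv_add (hf.1.of_le le_top).contDiffAt (hg.1.of_le le_top).contDiffAt
    rw [hsplit, hf.2, hg.2, ← Matrix.mulVec_add]
    rfl
  | smul c f _ hf =>
    refine ⟨hf.1.const_smul c, fun k => ?_⟩
    have hsplit : (fun j => iteratedDeriv k (c • f) (node (2 * n + 1) j)) =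
        c • fun j => iteratedDeriv k f (node (2 * n + 1) j) :=
      funext fun j => iteratedDeriv_const_smul_field c f
    rw [hsplit, hf.2, ← Matrix.mulVec_smul]
    rfl

theorem IsTrigPoly.mem_span_cexpModes {n : ℕ} {x : ℝ → ℂ} (hx : IsTrigPoly n x) :
    x ∈ Submodule.span ℂ (cexpModes n) := by
  obtain ⟨a, b, hab⟩ := hx
  set V := Submodule.span ℂ (cexpModes n)
  have hmode : ∀ m : ℤ, -(n : ℤ) ≤ m → m ≤ n → (fun t : ℝ => cexp (m * I * t)) ∈ V :=
    fun m hm₁ hm₂ => Submodule.subset_span ⟨m, ⟨hm₁, hm₂⟩, rfl⟩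
  have hcos : ∀ m ≤ n, (fun t : ℝ => (Real.cos (m * t) : ℂ)) ∈ V := by
    intro m hm
    convert V.smul_mem (2⁻¹ : ℂ) (V.add_mem (hmode m (by omega) (by omega))
      (hmode (-m) (by omega) (by omega))) using 1
    funext t
    simp only [Pi.smul_apply, Pi.add_apply, smul_eq_mul]
    rw [ofReal_cos, Complex.cos]
    push_cast
    ring_nf
  have hsin : ∀ m ≤ n, (fun t : ℝ => (Real.sin (m * t) : ℂ)) ∈ V := by
    intro m hm
    convert V.smul_mem (I / 2) (V.sub_mem (hmode (-m) (by omega) (by omega))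
      (hmode m (by omega) (by omega))) using 1
    funext t
    simp only [Pi.smul_apply, Pi.sub_apply, smul_eq_mul]
    rw [ofReal_sin, Complex.sin]
    push_cast
    ring_nf
  have hx : x = a 0 • (fun t : ℝ => cexp ((0 : ℤ) * I * t)) +
      ∑ m ∈ Icc 1 n, (a m • (fun t : ℝ => (Real.cos (m * t) : ℂ)) +
        b m • fun t : ℝ => (Real.sin (m * t) : ℂ)) := by
    funext t
    simp [hab t, Finset.sum_apply]
  rw [hx]
  refine V.add_mem (V.smul_mem _ (hmode 0 (by omega) (by omega))) (V.sum_mem fun m hm => ?_)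
  have hmn := (mem_Icc.mp hm).2
  exact V.add_mem (V.smul_mem _ (hcos m hmn)) (V.smul_mem _ (hsin m hmn))

theorem iterated_deriv_samples_eq_pow_mulVec (n : ℕ) (x : ℝ → ℂ)
    (hx : IsTrigPoly n x) (k : ℕ) :
    (fun j : Fin (2 * n + 1) => iteratedDeriv k x (node (2 * n + 1) j)) =
      ((Dmat (2 * n + 1)) ^ k).mulVec (fun j => x (node (2 * n + 1) j)) :=
  iteratedDeriv_node_eq_pow_mulVec_of_mem_span hx.mem_span_cexpModes k
end
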